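/- arXiv:2103.14013 — 7 statements merged into one kernel-verified Lean document; each statement's English description precedes it below -/
import Mathlib

section
/- Let X be a well-founded basic code. Then the lexicographic order ≺ restricted to X is a well-order: it is a linear order on X and every nonempty subset of X has a ≺-least element (equivalently, ≺ is well-founded on X). -/
universe u

/-- A *basic code*: a nonempty set of finite lists of ordinals that is closed under
prefixes and has no gaps. -/
def IsBasicCode (X : Set (List Ordinal.{u})) : Prop :=
  X.Nonempty ∧
  (∀ s ∈ X, ∀ t : List Ordinal.{u}, t <+: s → t ∈ X) ∧
  (∀ s : List Ordinal.{u}, ∀ α₁ α₂ : Ordinal.{u}, α₁ < α₂ → s ++ [α₂] ∈ X → s ++ [α₁] ∈ X)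

/-- The proper-extension relation on `X`: `ν` is below `η` iff `η` is a proper prefix of `ν`. -/
def Below (X : Set (List Ordinal.{u})) (ν η : {s : List Ordinal.{u} // s ∈ X}) : Prop :=
  (η : List Ordinal.{u}) <+: (ν : List Ordinal.{u}) ∧ (η : List Ordinal.{u}) ≠ (ν : List Ordinal.{u})

/-- A basic code is *well-founded* if the proper-extension relation is well-founded on it. -/
def IsWFCode (X : Set (List Ordinal.{u})) : Prop :=
  IsBasicCode X ∧ WellFounded (Below X)

/-- `f` satisfies the defining recurrence of the decode function of the code `X`:
the members of `f s` are exactly the sets `f (s ++ [α])` for those `α` with `s ++ [α] ∈ X`. -/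
def IsDecodeFun (X : Set (List Ordinal.{u})) (f : List Ordinal.{u} → ZFSet.{u}) : Prop :=
  ∀ s ∈ X, ∀ y : ZFSet.{u},
    y ∈ f s ↔ ∃ α : Ordinal.{u}, s ++ [α] ∈ X ∧ y = f (s ++ [α])

/-! A nonempty `S ⊆ X` of extensions of `t` has a lexicographically least element: either `t ∈ S`,
or restrict `S` to the members whose entry right after `t` is least, say `a₀`, and recurse on
`t ++ [a₀]`. The recursion descends along proper extensions inside `X`, so it stops. Starting at
`t = []` gives least elements of all nonempty subsets of `X`. -/

namespace List

variable {α : Type*}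

theorem exists_append_singleton_prefix_of_prefix_of_ne {t s : List α} (h : t <+: s)
    (hne : t ≠ s) : ∃ a, t ++ [a] <+: s := by
  obtain ⟨r, rfl⟩ := h
  cases r with
  | nil => exact absurd (append_nil t).symm hne
  | cons a r => exact ⟨a, r, by simp⟩

theorem lex_of_append_singleton_prefix {r : α → α → Prop} {t s u : List α} {a b : α}
    (hs : t ++ [a] <+: s) (hu : t ++ [b] <+: u) (hab : r a b) : Lex r s u := by
  obtain ⟨v, rfl⟩ := hs
  obtain ⟨w, rfl⟩ := hu
  simpa using Lex.append_left r (Lex.rel hab : Lex r (a :: v) (b :: w)) t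

end List

section WellFoundedCode

variable {α : Type*} [LinearOrder α] [WellFoundedLT α] {X : Set (List α)}

theorem exists_lex_minimal_of_forall_isPrefix (hpre : ∀ s ∈ X, ∀ t, t <+: s → t ∈ X)
    (hwf : WellFounded fun ν η : X => η.1 <+: ν.1 ∧ η.1 ≠ ν.1) (t : X) (S : Set X)
    (hS : S.Nonempty) (hext : ∀ s ∈ S, t.1 <+: s.1) :
    ∃ m ∈ S, ∀ s ∈ S, ¬ s.1 < m.1 := by
  induction t using hwf.induction generalizing S with
  | _ t ih =>
    by_cases htS : t ∈ S
    · exact ⟨t, htS, fun s hs => (hext s hs).le⟩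
    have hnext : ∀ s ∈ S, ∃ a, t.1 ++ [a] <+: s.1 := fun s hs =>
      List.exists_append_singleton_prefix_of_prefix_of_ne (hext s hs)
        fun h => htS (Subtype.ext h ▸ hs)
    obtain ⟨a₀, ⟨s₀, hs₀, hs₀a₀⟩, ha₀⟩ := wellFounded_lt.has_min {a | ∃ s ∈ S, t.1 ++ [a] <+: s.1}
      (let ⟨s, hs⟩ := hS; (hnext s hs).imp fun _ h => ⟨s, hs, h⟩)
    let t' : X := ⟨t.1 ++ [a₀], hpre _ s₀.2 _ hs₀a₀⟩
    obtain ⟨m, ⟨hmS, hmt'⟩, hm⟩ := ih t' ⟨⟨[a₀], rfl⟩, by simp [t']⟩ {s ∈ S | t'.1 <+: s.1}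
      ⟨s₀, hs₀, hs₀a₀⟩ fun s hs => hs.2
    refine ⟨m, hmS, fun s hs => ?_⟩
    obtain ⟨a, hsa⟩ := hnext s hs
    rcases (not_lt.mp (ha₀ a ⟨s, hs, hsa⟩)).eq_or_lt with rfl | ha₀a
    · exact hm s ⟨hs, hsa⟩
    · exact lt_asymm (a := m.1) (List.lex_of_append_singleton_prefix hmt' hsa ha₀a)

end WellFoundedCode

/-- The lexicographic order `≺` restricted to a well-founded basic code `X` is a
well-order: it is a strict linear order on `X`, every nonempty subset of `X` has a
`≺`-least element, and (equivalently) `≺` is well-founded on `X`. -/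
theorem lex_isWellOrder_on_wfCode (X : Set (List Ordinal.{u})) (hX : IsWFCode X) :
    IsStrictTotalOrder {s : List Ordinal.{u} // s ∈ X}
      (fun s t : {s : List Ordinal.{u} // s ∈ X} =>
        List.Lex (· < ·) (s : List Ordinal.{u}) (t : List Ordinal.{u})) ∧
    (∀ S : Set {s : List Ordinal.{u} // s ∈ X}, S.Nonempty →
      ∃ m ∈ S, ∀ t ∈ S, ¬ List.Lex (· < ·) (t : List Ordinal.{u}) (m : List Ordinal.{u})) ∧
    WellFounded (fun s t : {s : List Ordinal.{u} // s ∈ X} =>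
      List.Lex (· < ·) (s : List Ordinal.{u}) (t : List Ordinal.{u})) := by
  obtain ⟨⟨⟨s, hs⟩, hpre, -⟩, hwf⟩ := hX
  have hmin : ∀ S : Set X, S.Nonempty → ∃ m ∈ S, ∀ t ∈ S, ¬ t.1 < m.1 := fun S hS =>
    exists_lex_minimal_of_forall_isPrefix hpre hwf ⟨[], hpre s hs [] List.nil_prefix⟩ S hS
      fun _ _ => List.nil_prefix
  exact ⟨(Subtype.relEmbedding (· < ·) (· ∈ X)).isStrictTotalOrder, hmin,
    WellFounded.wellFounded_iff_has_min.mpr hmin⟩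
end

section
/- Let X₁ and X₂ be well-founded basic codes, and suppose there is an order isomorphism e : X₁ ≃ X₂ with respect to the proper-prefix relation, i.e. a bijection e between X₁ and X₂ such that for all s, t ∈ X₁, s is a proper prefix of t if and only if e(s) is a proper prefix of e(t). Then Decode(X₁) = Decode(X₂). -/
/-!
The children `s ++ [α]` of a node `s` of a prefix-closed code are exactly its immediate
successors for the proper-prefix relation, and the root `[]` is the only node without a proper
prefix. Both notions are order-theoretic, so an order isomorphism `e` fixes the root and maps the
children of `s` bijectively onto those of `e s`. Well-founded induction along the first code then
shows that the two decode functions agree at `s` and `e s`.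
-/

universe u

def IsImmediate {α : Type*} (r : α → α → Prop) (a b : α) : Prop :=
  r a b ∧ ∀ c, r a c → ¬ r c b

theorem RelIso.isImmediate_apply_iff {α β : Type*} {r : α → α → Prop} {s : β → β → Prop}
    (f : r ≃r s) {a b : α} : IsImmediate s (f a) (f b) ↔ IsImmediate r a b := by
  simp only [IsImmediate, f.surjective.forall, f.map_rel_iff]

section Code

variable {X : Set (List Ordinal.{u})}

theorem IsBasicCode.nil_mem (hX : IsBasicCode X) : [] ∈ X := by
  obtain ⟨s, hs⟩ := hX.1
  exact hX.2.1 s hs [] List.nil_prefix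

theorem not_below_nil (h : [] ∈ X) (η : {s // s ∈ X}) : ¬ Below X ⟨[], h⟩ η :=
  fun ⟨hpre, hne⟩ => hne (List.prefix_nil.mp hpre)

theorem length_lt_of_below {ν η : {s // s ∈ X}} (h : Below X ν η) :
    (η : List Ordinal).length < (ν : List Ordinal).length :=
  lt_of_le_of_ne h.1.length_le fun hlen => h.2 (h.1.eq_of_length hlen)

theorem isImmediate_below_iff (hX : ∀ s ∈ X, ∀ t : List Ordinal.{u}, t <+: s → t ∈ X)
    {t s : {s // s ∈ X}} :
    IsImmediate (Below X) t s ↔ ∃ α, (t : List Ordinal) = (s : List Ordinal) ++ [α] := by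
  constructor
  · rintro ⟨⟨⟨r, hr⟩, hne⟩, hmin⟩
    obtain ⟨b, r, rfl⟩ := List.exists_cons_of_ne_nil fun hr' : r = [] => hne (by simp_all)
    refine ⟨b, ?_⟩
    have hchild : (s : List Ordinal) ++ [b] ∈ X := hX t t.2 _ ⟨r, by simp [← hr]⟩
    have hbelow : Below X ⟨_, hchild⟩ s := ⟨List.prefix_append _ _, by simp⟩
    -- otherwise `s ++ [b]` lies strictly between `t` and `s`
    obtain rfl : r = [] := by
      by_contra hr'
      refine hmin ⟨_, hchild⟩ ⟨⟨r, by simp [← hr]⟩, fun h => hr' ?_⟩ hbelow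
      simpa [← hr] using h
    simp [← hr]
  · rintro ⟨α, ht⟩
    refine ⟨⟨⟨[α], ht.symm⟩, by simp [ht]⟩, fun v htv hvs => ?_⟩
    have h₁ := length_lt_of_below htv
    have h₂ := length_lt_of_below hvs
    simp only [ht, List.length_append, List.length_singleton] at h₁
    omega

theorem IsDecodeFun.mem_iff {f : List Ordinal.{u} → ZFSet.{u}} (hf : IsDecodeFun X f)
    (hX : ∀ s ∈ X, ∀ t : List Ordinal.{u}, t <+: s → t ∈ X) (s : {s // s ∈ X}) (y : ZFSet.{u}) :
    y ∈ f s ↔ ∃ t : {s // s ∈ X}, IsImmediate (Below X) t s ∧ y = f t := by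
  simp only [hf s s.2 y, isImmediate_below_iff hX]
  constructor
  · rintro ⟨α, hα, rfl⟩
    exact ⟨⟨_, hα⟩, ⟨α, rfl⟩, rfl⟩
  · rintro ⟨t, ⟨α, ht⟩, rfl⟩
    exact ⟨α, ht ▸ t.2, by rw [ht]⟩

end Code

section OrderIso

variable {X₁ X₂ : Set (List Ordinal.{u})}

theorem RelIso.apply_nil (e : Below X₁ ≃r Below X₂) (h₁ : [] ∈ X₁) (h₂ : [] ∈ X₂) :
    e ⟨[], h₁⟩ = ⟨[], h₂⟩ := by
  by_contra hne
  have hbelow : Below X₂ (e ⟨[], h₁⟩) (e (e.symm ⟨[], h₂⟩)) := by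
    rw [e.apply_symm_apply]
    exact ⟨List.nil_prefix, fun h => hne (Subtype.ext h.symm)⟩
  exact not_below_nil h₁ _ (e.map_rel_iff.mp hbelow)

theorem decodeFun_apply_eq_of_relIso (hwf : WellFounded (Below X₁))
    (hX₁ : ∀ s ∈ X₁, ∀ t : List Ordinal.{u}, t <+: s → t ∈ X₁)
    (hX₂ : ∀ s ∈ X₂, ∀ t : List Ordinal.{u}, t <+: s → t ∈ X₂)
    (e : Below X₁ ≃r Below X₂) {f₁ f₂ : List Ordinal.{u} → ZFSet.{u}}
    (hf₁ : IsDecodeFun X₁ f₁) (hf₂ : IsDecodeFun X₂ f₂) (s : {s // s ∈ X₁}) :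
    f₁ s = f₂ (e s) := by
  induction s using hwf.induction with
  | _ s ih =>
    ext y
    calc y ∈ f₁ s ↔ ∃ t, IsImmediate (Below X₁) t s ∧ y = f₁ t := hf₁.mem_iff hX₁ s y
      _ ↔ ∃ t, IsImmediate (Below X₂) (e t) (e s) ∧ y = f₂ (e t) :=
        exists_congr fun t => by
          rw [e.isImmediate_apply_iff]
          exact and_congr_right fun ht => by rw [ih t ht.1]
      _ ↔ ∃ t, IsImmediate (Below X₂) t (e s) ∧ y = f₂ t :=
        (e.surjective.exists (p := fun t => IsImmediate (Below X₂) t (e s) ∧ y = f₂ t)).symm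
      _ ↔ y ∈ f₂ (e s) := (hf₂.mem_iff hX₂ (e s) y).symm

end OrderIso

/-- If two well-founded basic codes are order isomorphic with respect to the
proper-prefix relation, then they decode to the same set. -/
theorem decode_eq_of_orderIso (X₁ X₂ : Set (List Ordinal.{u}))
    (h₁ : IsWFCode X₁) (h₂ : IsWFCode X₂)
    (e : {s : List Ordinal.{u} // s ∈ X₁} ≃ {s : List Ordinal.{u} // s ∈ X₂})
    (he : ∀ s t : {s : List Ordinal.{u} // s ∈ X₁},
      ((s : List Ordinal.{u}) <+: (t : List Ordinal.{u}) ∧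
          (s : List Ordinal.{u}) ≠ (t : List Ordinal.{u})) ↔
        ((e s : List Ordinal.{u}) <+: (e t : List Ordinal.{u}) ∧
          (e s : List Ordinal.{u}) ≠ (e t : List Ordinal.{u})))
    (f₁ f₂ : List Ordinal.{u} → ZFSet.{u})
    (hf₁ : IsDecodeFun X₁ f₁) (hf₂ : IsDecodeFun X₂ f₂) :
    f₁ [] = f₂ [] := by
  let e' : Below X₁ ≃r Below X₂ := ⟨e, fun {a b} => (he b a).symm⟩
  have hroot := e'.apply_nil h₁.1.nil_mem h₂.1.nil_mem
  have := decodeFun_apply_eq_of_relIso h₁.2 h₁.1.2.1 h₂.1.2.1 e' hf₁ hf₂ ⟨[], h₁.1.nil_mem⟩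
  rwa [hroot] at this
end

section
/- For every x : ZFSet there exists a well-founded basic code X with Decode(X) = x. (The proof uses the axiom of choice, via a well-ordering of the transitive closure of {x}.) -/
/-!
Well-ordering the members of each set `y` enumerates them as `enum y α` for `α` in an initial
segment `[0, enumLen y)` of the ordinals. The code of `x` consists of the finite ordinal paths that can be
followed down the membership tree of `x`, and decoding a path yields the set it reaches. Gaps
cannot occur because every enumeration is indexed by an initial segment, and an infinite chain of
proper extensions would give an infinite descending `∈`-chain.
-/

universe u

namespace ZFSet

theorem exists_enum (y : ZFSet.{u}) :
    ∃ (o : Ordinal.{u}) (g : Ordinal.{u} → ZFSet.{u}), ∀ z, z ∈ y ↔ ∃ α < o, g α = z := by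
  classical
  let e : Shrink.{u} y ≃ y := (equivShrink _).symm
  let r : Shrink.{u} y → Shrink.{u} y → Prop := WellOrderingRel
  refine ⟨Ordinal.type r, fun α => if h : α < Ordinal.type r then e (Ordinal.enum r ⟨α, h⟩) else ∅,
    fun z => ⟨fun hz => ?_, ?_⟩⟩
  · refine ⟨Ordinal.typein r (e.symm ⟨z, hz⟩), Ordinal.typein_lt_type _ _, ?_⟩
    simp [Ordinal.typein_lt_type]
  · rintro ⟨α, hα, rfl⟩
    simp only [dif_pos hα]
    exact Subtype.prop _

noncomputable section

def enumLen (y : ZFSet.{u}) : Ordinal.{u} := (exists_enum y).choose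

def enum (y : ZFSet.{u}) : Ordinal.{u} → ZFSet.{u} := (exists_enum y).choose_spec.choose

theorem mem_iff_exists_enum {y z : ZFSet.{u}} : z ∈ y ↔ ∃ α < enumLen y, enum y α = z :=
  (exists_enum y).choose_spec.choose_spec z

open Classical in
def child (y : ZFSet.{u}) (α : Ordinal.{u}) : Option ZFSet.{u} :=
  if α < enumLen y then some (enum y α) else none

theorem exists_child_eq_some_iff {y z : ZFSet.{u}} : (∃ α, child y α = some z) ↔ z ∈ y := by
  simp [child, mem_iff_exists_enum]

theorem mem_of_child_eq_some {y z : ZFSet.{u}} {α : Ordinal.{u}} (h : child y α = some z) :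
    z ∈ y :=
  exists_child_eq_some_iff.1 ⟨α, h⟩

theorem isSome_child_of_lt {y : ZFSet.{u}} {α₁ α₂ : Ordinal.{u}} (h : α₁ < α₂)
    (h₂ : (child y α₂).isSome) : (child y α₁).isSome := by
  unfold child at *
  split_ifs at h₂ with h'
  · simp [h.trans h']
  · simp at h₂

def follow (y : ZFSet.{u}) (s : List Ordinal.{u}) : Option ZFSet.{u} := s.foldlM child y

@[simp] theorem follow_nil (y : ZFSet.{u}) : follow y [] = some y := rfl

theorem follow_cons (y : ZFSet.{u}) (α : Ordinal.{u}) (s : List Ordinal.{u}) :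
    follow y (α :: s) = (child y α).bind (follow · s) := rfl

theorem follow_append (y : ZFSet.{u}) (s t : List Ordinal.{u}) :
    follow y (s ++ t) = (follow y s).bind (follow · t) := by
  simp [follow, List.foldlM_append]

theorem follow_concat (y : ZFSet.{u}) (s : List Ordinal.{u}) (α : Ordinal.{u}) :
    follow y (s ++ [α]) = (follow y s).bind (child · α) := by
  simp [follow_append, follow_cons]

theorem transGen_mem_of_follow_eq_some {y z : ZFSet.{u}} {t : List Ordinal.{u}} (ht : t ≠ [])
    (h : follow y t = some z) : Relation.TransGen (· ∈ ·) z y := by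
  induction t generalizing y with
  | nil => exact absurd rfl ht
  | cons α s ih =>
    obtain ⟨w, hw, hs⟩ := Option.bind_eq_some_iff.1 h
    have hwy := mem_of_child_eq_some hw
    rcases eq_or_ne s [] with rfl | hs'
    · cases hs
      exact .single hwy
    · exact (ih hs' hs).tail hwy

def code (x : ZFSet.{u}) : Set (List Ordinal.{u}) := {s | (follow x s).isSome}

def decodeFun (x : ZFSet.{u}) (s : List Ordinal.{u}) : ZFSet.{u} := (follow x s).getD ∅

theorem follow_eq_some_decodeFun {x : ZFSet.{u}} {s : List Ordinal.{u}} (hs : s ∈ code x) :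
    follow x s = some (decodeFun x s) := by
  obtain ⟨y, hy⟩ := Option.isSome_iff_exists.1 hs
  simp [decodeFun, hy]

theorem isBasicCode_code (x : ZFSet.{u}) : IsBasicCode (code x) := by
  refine ⟨⟨[], rfl⟩, ?_, ?_⟩
  · rintro s hs t ⟨r, rfl⟩
    simp only [code, Set.mem_ofPred_eq, follow_append] at hs ⊢
    exact Option.isSome_of_isSome_bind hs
  · intro s α₁ α₂ h h₂
    simp only [code, Set.mem_ofPred_eq, follow_concat] at h₂ ⊢
    cases hs : follow x s with
    | none => simp [hs] at h₂
    | some y =>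
      simp only [hs, Option.bind_some] at h₂ ⊢
      exact isSome_child_of_lt h h₂

theorem wellFounded_below_code (x : ZFSet.{u}) : WellFounded (Below (code x)) := by
  refine Subrelation.wf (r := InvImage (Relation.TransGen (· ∈ ·)) fun η : code x => decodeFun x η)
    ?_ (InvImage.wf _ mem_wf.transGen)
  rintro ⟨ν, hν⟩ ⟨η, hη⟩ ⟨⟨t, rfl⟩, hne⟩
  refine transGen_mem_of_follow_eq_some (t := t) (by rintro rfl; simp at hne) ?_
  have h := follow_eq_some_decodeFun hν
  rwa [follow_append, follow_eq_some_decodeFun hη, Option.bind_some] at h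

theorem isDecodeFun_code (x : ZFSet.{u}) : IsDecodeFun (code x) (decodeFun x) := by
  intro s hs z
  set y := decodeFun x s
  have hconcat : ∀ α, follow x (s ++ [α]) = child y α := by
    simp [follow_concat, follow_eq_some_decodeFun hs, y]
  rw [← exists_child_eq_some_iff]
  simp only [code, Set.mem_ofPred_eq, decodeFun, hconcat]
  refine exists_congr fun α => ?_
  cases child y α <;> simp [eq_comm]

end

end ZFSet

/-- Every `ZFSet` is encoded by some well-founded basic code. -/
theorem exists_wfCode_decode_eq (x : ZFSet.{u}) :
    ∃ X : Set (List Ordinal.{u}), IsWFCode X ∧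
      ∃ f : List Ordinal.{u} → ZFSet.{u}, IsDecodeFun X f ∧ f [] = x :=
  ⟨ZFSet.code x, ⟨ZFSet.isBasicCode_code x, ZFSet.wellFounded_below_code x⟩,
    ZFSet.decodeFun x, ZFSet.isDecodeFun_code x, rfl⟩
end

section
/- Let X be a well-founded basic code. Then the image of decode_X (the set {decode_X(η) | η ∈ X} ⊆ ZFSet) is exactly the transitive closure of {Decode(X)}, i.e. the smallest set T : Set ZFSet such that Decode(X) ∈ T and such that whenever y ∈ T and z is a ZFSet-member of y, then z ∈ T. In other words, the basic code mirrors the transitive closure of the set it encodes. -/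
universe u

/-! Walking down the prefixes of `s`, the recurrence for `f` gives a chain of memberships
`f s ∈ ⋯ ∈ f []`, so `f s` lies in every membership-closed set containing `f []`. Conversely the
same recurrence says the members of `f s` are again values of `f`, so the image of `f` is
itself such a set. -/

def IsMemClosed (T : Set ZFSet.{u}) : Prop :=
  ∀ y ∈ T, ∀ z : ZFSet.{u}, z ∈ y → z ∈ T

section PrefixClosed

variable {X : Set (List Ordinal.{u})} (hpre : ∀ s ∈ X, ∀ t : List Ordinal.{u}, t <+: s → t ∈ X)
include hpre

theorem nil_mem_of_prefix_closed (hne : X.Nonempty) : ([] : List Ordinal.{u}) ∈ X :=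
  hne.elim fun s hs => hpre s hs [] List.nil_prefix

theorem IsDecodeFun.apply_mem_of_memClosed {f : List Ordinal.{u} → ZFSet.{u}}
    (hf : IsDecodeFun X f) {T : Set ZFSet.{u}} (hT₀ : f [] ∈ T) (hT : IsMemClosed T) :
    ∀ s ∈ X, f s ∈ T := by
  intro s hs
  induction s using List.reverseRecOn with
  | nil => exact hT₀
  | append_singleton s α ih =>
    have hsX : s ∈ X := hpre _ hs s ⟨[α], rfl⟩
    exact hT (f s) (ih hsX) _ ((hf s hsX _).2 ⟨α, hs, rfl⟩)

end PrefixClosed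

theorem IsDecodeFun.image_memClosed {X : Set (List Ordinal.{u})} {f : List Ordinal.{u} → ZFSet.{u}}
    (hf : IsDecodeFun X f) : IsMemClosed {y | ∃ s ∈ X, y = f s} := by
  rintro - ⟨s, hs, rfl⟩ z hz
  obtain ⟨α, hα, rfl⟩ := (hf s hs z).1 hz
  exact ⟨s ++ [α], hα, rfl⟩

/-- The image of the decode function of a well-founded basic code `X` is exactly the
transitive closure of `{Decode X}`, i.e. the smallest collection of `ZFSet`s containing
`Decode X` and closed under membership. -/
theorem decode_image_eq_transitiveClosure (X : Set (List Ordinal.{u})) (hX : IsWFCode X)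
    (f : List Ordinal.{u} → ZFSet.{u}) (hf : IsDecodeFun X f) :
    {y : ZFSet.{u} | ∃ s ∈ X, y = f s} =
      ⋂₀ {T : Set ZFSet.{u} | f [] ∈ T ∧ ∀ y ∈ T, ∀ z : ZFSet.{u}, z ∈ y → z ∈ T} := by
  obtain ⟨⟨hne, hpre, -⟩, -⟩ := hX
  apply Set.Subset.antisymm
  · rintro - ⟨s, hs, rfl⟩ T ⟨hT₀, hT⟩
    exact hf.apply_mem_of_memClosed hpre hT₀ hT s hs
  · exact Set.sInter_subset_of_mem ⟨⟨[], nil_mem_of_prefix_closed hpre hne, rfl⟩, hf.image_memClosed⟩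
end

section
/- For every ordinal α, the set 𝒪_α := {s : List Ordinal | s is strictly decreasing and every entry of s is < α} is a well-founded basic code, and it is the canonical code of the α-th von Neumann ordinal in the following sense: for every y : ZFSet, y is a member of Decode(𝒪_α) if and only if there exists β < α with y = Decode(𝒪_β). -/
universe u

/-- The canonical code of the `α`-th von Neumann ordinal: the set of strictly decreasing
lists of ordinals all of whose entries are `< α`. -/
def ordCode (α : Ordinal.{u}) : Set (List Ordinal.{u}) :=
  {s : List Ordinal.{u} | List.Chain' (· > ·) s ∧ ∀ β ∈ s, β < α}

/-!
A list `s` lies in `ordCode α` exactly when `α :: s` is strictly decreasing. Hence the last entry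
of `α :: s` strictly decreases along proper extensions, which makes the code well-founded, and
`s ↦ (s.getLastD α).toZFSet` is a decode function. Conversely, dropping the first entry `γ`
identifies the subtree of `ordCode α` above `[γ]` with `ordCode γ`, so by induction on `α` every
decode function of `ordCode α` sends `[]` to the von Neumann ordinal `α.toZFSet`.
-/

theorem List.getLastD_append {α : Type*} (s t : List α) (a : α) :
    (s ++ t).getLastD a = t.getLastD (s.getLastD a) := by
  induction s generalizing a with
  | nil => rfl
  | cons b s ih => simp only [List.cons_append, List.getLastD_cons, ih]

theorem mem_ordCode_iff_isChain {α : Ordinal.{u}} {s : List Ordinal.{u}} :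
    s ∈ ordCode α ↔ List.IsChain (· > ·) (α :: s) := by
  change List.IsChain _ s ∧ _ ↔ _
  simp only [List.isChain_iff_pairwise, List.pairwise_cons, and_comm]

@[simp]
theorem nil_mem_ordCode (α : Ordinal.{u}) : [] ∈ ordCode α := by
  simp [mem_ordCode_iff_isChain]

@[simp]
theorem cons_mem_ordCode {α γ : Ordinal.{u}} {s : List Ordinal.{u}} :
    γ :: s ∈ ordCode α ↔ γ < α ∧ s ∈ ordCode γ := by
  simp only [mem_ordCode_iff_isChain, List.isChain_cons_cons, gt_iff_lt]

theorem append_mem_ordCode {α : Ordinal.{u}} {s t : List Ordinal.{u}} :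
    s ++ t ∈ ordCode α ↔ s ∈ ordCode α ∧ t ∈ ordCode (s.getLastD α) := by
  induction s generalizing α with
  | nil => simp
  | cons γ s ih => simp only [List.cons_append, cons_mem_ordCode, ih, List.getLastD_cons, and_assoc]

theorem append_singleton_mem_ordCode {α γ : Ordinal.{u}} {s : List Ordinal.{u}} :
    s ++ [γ] ∈ ordCode α ↔ s ∈ ordCode α ∧ γ < s.getLastD α := by
  simp [append_mem_ordCode]

theorem getLastD_lt_of_mem_ordCode {α γ : Ordinal.{u}} {s : List Ordinal.{u}}
    (hs : s ∈ ordCode α) (hne : s ≠ []) : s.getLastD γ < α := by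
  rw [← List.dropLast_append_getLast hne, List.getLastD_concat]
  exact hs.2 _ (List.getLast_mem hne)

theorem isBasicCode_ordCode (α : Ordinal.{u}) : IsBasicCode (ordCode α) := by
  refine ⟨⟨[], nil_mem_ordCode α⟩, ?_, ?_⟩
  · rintro _ hs t ⟨u, rfl⟩
    exact (append_mem_ordCode.mp hs).1
  · intro s α₁ α₂ h12 h2
    rw [append_singleton_mem_ordCode] at h2 ⊢
    exact ⟨h2.1, h12.trans h2.2⟩

theorem getLastD_lt_of_below_ordCode {α : Ordinal.{u}} {ν η : ordCode α}
    (h : Below (ordCode α) ν η) : ν.1.getLastD α < η.1.getLastD α := by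
  obtain ⟨⟨t, ht⟩, hne⟩ := h
  have hν := ν.2
  rw [← ht] at hν ⊢
  rw [List.getLastD_append]
  refine getLastD_lt_of_mem_ordCode (append_mem_ordCode.mp hν).2 ?_
  rintro rfl
  exact hne (by simpa using ht)

theorem wellFounded_below_ordCode (α : Ordinal.{u}) : WellFounded (Below (ordCode α)) :=
  Subrelation.wf getLastD_lt_of_below_ordCode (InvImage.wf _ Ordinal.lt_wf)

theorem isWFCode_ordCode (α : Ordinal.{u}) : IsWFCode (ordCode α) :=
  ⟨isBasicCode_ordCode α, wellFounded_below_ordCode α⟩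

theorem isDecodeFun_ordCode (α : Ordinal.{u}) :
    IsDecodeFun (ordCode α) fun s => (s.getLastD α).toZFSet := by
  intro s hs y
  simp only [Ordinal.mem_toZFSet_iff, append_singleton_mem_ordCode, hs, true_and,
    List.getLastD_concat, eq_comm]

theorem IsDecodeFun.ordCode_cons {α γ : Ordinal.{u}} {f : List Ordinal.{u} → ZFSet.{u}}
    (hf : IsDecodeFun (ordCode α) f) (hγ : γ < α) :
    IsDecodeFun (ordCode γ) fun s => f (γ :: s) := by
  intro s hs y
  simpa only [List.cons_append, cons_mem_ordCode, hγ, true_and] using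
    hf (γ :: s) (cons_mem_ordCode.mpr ⟨hγ, hs⟩) y

theorem IsDecodeFun.apply_nil_eq_toZFSet {α : Ordinal.{u}} {f : List Ordinal.{u} → ZFSet.{u}}
    (hf : IsDecodeFun (ordCode α) f) : f [] = α.toZFSet := by
  induction α using WellFoundedLT.induction generalizing f with
  | ind α ih =>
    have hsingleton : ∀ β < α, f [β] = β.toZFSet := fun β hβ => ih β hβ (hf.ordCode_cons hβ)
    ext y
    rw [hf [] (nil_mem_ordCode α), Ordinal.mem_toZFSet_iff]
    simp only [List.nil_append, cons_mem_ordCode, nil_mem_ordCode, and_true]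
    exact exists_congr fun β => and_congr_right fun hβ => by rw [hsingleton β hβ, eq_comm]

/-- For every ordinal `α`, `ordCode α` is a well-founded basic code, it has a decode
function, and it decodes to the `α`-th von Neumann ordinal: the members of
`Decode (ordCode α)` are exactly the sets `Decode (ordCode β)` for `β < α`. -/
theorem ordCode_isWFCode_and_decode (α : Ordinal.{u}) :
    IsWFCode (ordCode α) ∧
    (∃ f : List Ordinal.{u} → ZFSet.{u}, IsDecodeFun (ordCode α) f) ∧
    ∀ f : List Ordinal.{u} → ZFSet.{u}, IsDecodeFun (ordCode α) f →
      ∀ y : ZFSet.{u}, y ∈ f [] ↔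
        ∃ β : Ordinal.{u}, β < α ∧
          ∃ g : List Ordinal.{u} → ZFSet.{u}, IsDecodeFun (ordCode β) g ∧ y = g [] := by
  refine ⟨isWFCode_ordCode α, ⟨_, isDecodeFun_ordCode α⟩, fun f hf y => ?_⟩
  rw [hf.apply_nil_eq_toZFSet, Ordinal.mem_toZFSet_iff]
  constructor
  · rintro ⟨β, hβ, rfl⟩
    exact ⟨β, hβ, _, isDecodeFun_ordCode β, rfl⟩
  · rintro ⟨β, hβ, g, hg, rfl⟩
    exact ⟨β, hβ, hg.apply_nil_eq_toZFSet.symm⟩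
end

section
/- The transitive closure function trcl : ZFSet → ZFSet, the unique function satisfying trcl(x) = x ∪ ⋃_{y ∈ x} trcl(y) (equivalently, trcl(x) is the smallest transitive ZFSet containing x as a subset), is a primitive recursive set function. -/
universe u

open scoped Classical

/-- The primitive recursive set functions of Jensen–Karp: the smallest collection of
functions `(Fin n → ZFSet) → ZFSet` containing the constant `∅` function, the
projections, `(x, y) ↦ x ∪ {y}` and the membership conditional, and closed under
substitution of a function into one argument slot and under the recursion scheme
`F(x̄, z) = G(⋃ {F(x̄, u) | u ∈ z}, x̄, z)`. -/
inductive PrimRecSet : {n : ℕ} → ((Fin n → ZFSet.{u}) → ZFSet.{u}) → Prop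
  /-- The constant function with value `∅`. -/
  | empty : PrimRecSet (n := 1) fun _ => ∅
  /-- The projections `P_{n,i}`. -/
  | proj {n : ℕ} (i : Fin n) : PrimRecSet fun x => x i
  /-- The binary function `(x, y) ↦ x ∪ {y}`. -/
  | adjoin : PrimRecSet (n := 2) fun x => x 0 ∪ {x 1}
  /-- The conditional `C(x, y, u, v)`, equal to `u` if `x ∈ y` and to `v` otherwise. -/
  | cond : PrimRecSet (n := 4) fun x => if x 0 ∈ x 1 then x 2 else x 3
  /-- Composition in the first slot: `F(x̄, ȳ) = G(H(x̄), ȳ)`. -/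
  | comp₁ {m k : ℕ} {G : (Fin (k + 1) → ZFSet.{u}) → ZFSet.{u}}
      {H : (Fin m → ZFSet.{u}) → ZFSet.{u}} :
      PrimRecSet G → PrimRecSet H →
      PrimRecSet (n := m + k) fun x =>
        G (Fin.cons (H fun i => x (Fin.castAdd k i)) fun j => x (Fin.natAdd m j))
  /-- Composition in a middle slot: `F(x̄, ȳ) = G(x̄, H(x̄), ȳ)`. -/
  | comp₂ {m k : ℕ} {G : (Fin (m + 1 + k) → ZFSet.{u}) → ZFSet.{u}}
      {H : (Fin m → ZFSet.{u}) → ZFSet.{u}} :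
      PrimRecSet G → PrimRecSet H →
      PrimRecSet (n := m + k) fun x =>
        G (Fin.append
            (Fin.snoc (fun i : Fin m => x (Fin.castAdd k i))
              (H fun i => x (Fin.castAdd k i)))
            fun j : Fin k => x (Fin.natAdd m j))
  /-- The recursion scheme: if `G` is primitive recursive of arity `n + 2`, then so is the
  unique `F` of arity `n + 1` satisfying
  `F(x̄, z) = G(⋃ {F(x̄, u) | u ∈ z}, x̄, z)`, where the first argument is the `ZFSet`
  whose members are exactly the members of the values `F(x̄, u)` for `u ∈ z`. -/
  | recursion {n : ℕ} {G : (Fin (n + 2) → ZFSet.{u}) → ZFSet.{u}}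
      {F : (Fin (n + 1) → ZFSet.{u}) → ZFSet.{u}} :
      PrimRecSet G →
      (∀ (x : Fin n → ZFSet.{u}) (z U : ZFSet.{u}),
        (∀ w : ZFSet.{u}, w ∈ U ↔ ∃ u ∈ z, w ∈ F (Fin.snoc x u)) →
        F (Fin.snoc x z) = G (Fin.cons U (Fin.snoc x z))) →
      PrimRecSet F

/-!
The map `z ↦ trcl z ∪ {z}` satisfies the recursion scheme with `G = adjoin`, and
`trcl z = ⋃_{u ∈ z} (trcl u ∪ {u})`. The recursion scheme only takes unions of values of the
function being defined, so unions `⋃_{u ∈ z} H(x̄, u)` of a given primitive recursive `H` need a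
trick: define `F(x̄, p, z) = H(x̄, z)` if `z ∈ p` and `F(x̄, p, z) = ⋃_{u ∈ z} F(x̄, p, u)`
otherwise; since `z ∉ z`, the diagonal `F(x̄, z, z)` is `⋃_{u ∈ z} H(x̄, u)`.
-/

namespace ZFSet

theorem mem_iUnion_mem {x w : ZFSet.{u}} {f : ZFSet.{u} → ZFSet.{u}} :
    w ∈ ZFSet.iUnion (fun y : x => f y) ↔ ∃ y ∈ x, w ∈ f y := by
  rw [mem_iUnion]
  exact ⟨fun ⟨y, hw⟩ => ⟨y, y.2, hw⟩, fun ⟨y, hy, hw⟩ => ⟨⟨y, hy⟩, hw⟩⟩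

noncomputable def trcl (x : ZFSet.{u}) : ZFSet.{u} :=
  x ∪ ZFSet.iUnion fun y : x => trcl y
termination_by x
decreasing_by exact y.2

theorem mem_trcl {x w : ZFSet.{u}} : w ∈ trcl x ↔ w ∈ x ∨ ∃ y ∈ x, w ∈ trcl y := by
  rw [trcl, mem_union, mem_iUnion_mem]

end ZFSet

namespace PrimRecSet

variable {n m : ℕ}

theorem arity_pos {F : (Fin n → ZFSet.{u}) → ZFSet.{u}} (hF : PrimRecSet F) : 0 < n := by
  induction hF with
  | proj i => exact i.pos
  | _ => omega

theorem comp_castAdd {H : (Fin m → ZFSet.{u}) → ZFSet.{u}} (hH : PrimRecSet H) (k : ℕ) :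
    PrimRecSet (n := m + k) fun x => H fun i => x (Fin.castAdd k i) :=
  comp₁ (proj 0) hH

theorem comp_snoc {G : (Fin (n + 1) → ZFSet.{u}) → ZFSet.{u}}
    {H : (Fin n → ZFSet.{u}) → ZFSet.{u}} (hG : PrimRecSet G) (hH : PrimRecSet H) :
    PrimRecSet fun x => G (Fin.snoc x (H x)) := by
  simpa [Fin.append_right_nil _ _ rfl] using comp₂ (k := 0) hG hH

theorem comp_append {G : (Fin (n + m) → ZFSet.{u}) → ZFSet.{u}}
    {H : Fin m → (Fin n → ZFSet.{u}) → ZFSet.{u}} (hG : PrimRecSet G)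
    (hH : ∀ i, PrimRecSet (H i)) :
    PrimRecSet fun x => G (Fin.append x fun i => H i x) := by
  induction m with
  | zero => simpa [Fin.append_right_nil _ _ rfl] using hG
  | succ m ih =>
    have hG' := comp_snoc hG (comp_castAdd (hH (Fin.last m)) m)
    have := ih hG' fun i => hH i.castSucc
    simp only [Fin.append_left, ← Fin.append_snoc] at this
    convert this using 4 with x
    exact (Fin.snoc_init_self fun i => H i x).symm

theorem comp {k : ℕ} {G : (Fin k → ZFSet.{u}) → ZFSet.{u}}
    {H : Fin k → (Fin n → ZFSet.{u}) → ZFSet.{u}} (hG : PrimRecSet G)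
    (hH : ∀ i, PrimRecSet (H i)) :
    PrimRecSet fun x => G fun i => H i x := by
  obtain ⟨k, rfl⟩ : ∃ k', k = k' + 1 := Nat.exists_eq_succ_of_ne_zero hG.arity_pos.ne'
  have := comp_append (comp₁ hG (hH 0)) fun i => hH i.succ
  simp only [Fin.append_left, Fin.append_right] at this
  convert this using 3 with x
  exact (Fin.cons_self_tail fun i => H i x).symm

noncomputable def unionUntil (H : (Fin (n + 1) → ZFSet.{u}) → ZFSet.{u}) (x : Fin n → ZFSet.{u})
    (p z : ZFSet.{u}) : ZFSet.{u} :=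
  if z ∈ p then H (Fin.snoc x z) else ZFSet.iUnion fun u : z => unionUntil H x p u
termination_by z
decreasing_by exact u.2

section unionUntil

variable {H : (Fin (n + 1) → ZFSet.{u}) → ZFSet.{u}} {x : Fin n → ZFSet.{u}} {p z : ZFSet.{u}}

theorem unionUntil_of_mem (h : z ∈ p) : unionUntil H x p z = H (Fin.snoc x z) := by
  rw [unionUntil, if_pos h]

theorem mem_unionUntil_of_notMem (h : z ∉ p) {w : ZFSet.{u}} :
    w ∈ unionUntil H x p z ↔ ∃ u ∈ z, w ∈ unionUntil H x p u := by
  rw [unionUntil, if_neg h, ZFSet.mem_iUnion_mem]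

theorem mem_unionUntil_self {w : ZFSet.{u}} :
    w ∈ unionUntil H x z z ↔ ∃ u ∈ z, w ∈ H (Fin.snoc x u) := by
  rw [mem_unionUntil_of_notMem (ZFSet.mem_irrefl z)]
  exact exists_congr fun u => and_congr_right fun hu => by rw [unionUntil_of_mem hu]

end unionUntil

theorem unionUntil_primRecSet {H : (Fin (n + 1) → ZFSet.{u}) → ZFSet.{u}} (hH : PrimRecSet H) :
    PrimRecSet fun v : Fin (n + 2) → ZFSet.{u} =>
      unionUntil H (Fin.init (Fin.init v)) (v (Fin.last n).castSucc) (v (Fin.last (n + 1))) := by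
  -- `w = (U, x̄, p, z)`
  have hG : PrimRecSet fun w : Fin (n + 3) → ZFSet.{u} =>
      if w (Fin.last (n + 1)).succ ∈ w (Fin.last n).castSucc.succ then
        H (Fin.snoc (fun i => w i.castSucc.castSucc.succ) (w (Fin.last (n + 1)).succ))
      else w 0 := by
    refine comp (H := ![fun w => w (Fin.last (n + 1)).succ, fun w => w (Fin.last n).castSucc.succ,
      fun w => H (Fin.snoc (fun i => w i.castSucc.castSucc.succ) (w (Fin.last (n + 1)).succ)),
      fun w => w 0]) cond fun i => ?_
    fin_cases i <;> dsimp
    · exact proj _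
    · exact proj _
    · refine comp hH fun j => Fin.lastCases ?_ (fun i => ?_) j <;>
        simp only [Fin.snoc_last, Fin.snoc_castSucc] <;> exact proj _
    · exact proj _
  refine recursion hG fun x' z U hU => ?_
  simp only [Fin.init_snoc, Fin.cons_succ, Fin.cons_zero, Fin.snoc_last,
    Fin.snoc_castSucc] at hU ⊢
  split_ifs with hz
  · exact unionUntil_of_mem hz
  · ext w
    rw [mem_unionUntil_of_notMem hz, hU]

theorem biUnion {H F : (Fin (n + 1) → ZFSet.{u}) → ZFSet.{u}} (hH : PrimRecSet H)
    (hF : ∀ x z w, w ∈ F (Fin.snoc x z) ↔ ∃ u ∈ z, w ∈ H (Fin.snoc x u)) :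
    PrimRecSet F := by
  have := comp_snoc (unionUntil_primRecSet hH) (proj (Fin.last n))
  simp only [Fin.init_snoc, Fin.snoc_castSucc, Fin.snoc_last] at this
  convert this using 2 with v
  rw [← Fin.snoc_init_self v]
  ext w
  simp only [Fin.init_snoc, Fin.snoc_last, hF, mem_unionUntil_self]

end PrimRecSet

/-- The transitive closure function `trcl`, i.e. the unique function satisfying
`trcl x = x ∪ ⋃_{y ∈ x} trcl y` (membershipwise: `w ∈ trcl x ↔ w ∈ x ∨ ∃ y ∈ x, w ∈ trcl y`),
exists and is a primitive recursive set function. -/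
theorem trcl_primRecSet :
    (∃ trcl : ZFSet.{u} → ZFSet.{u},
      ∀ x w : ZFSet.{u}, w ∈ trcl x ↔ w ∈ x ∨ ∃ y ∈ x, w ∈ trcl y) ∧
    ∀ trcl : ZFSet.{u} → ZFSet.{u},
      (∀ x w : ZFSet.{u}, w ∈ trcl x ↔ w ∈ x ∨ ∃ y ∈ x, w ∈ trcl y) →
      PrimRecSet (n := 1) fun v => trcl (v 0) := by
  refine ⟨⟨ZFSet.trcl, fun _ _ => ZFSet.mem_trcl⟩, fun trcl htrcl => ?_⟩
  have mem_trcl_iff (z w : ZFSet.{u}) : w ∈ trcl z ↔ ∃ u ∈ z, w ∈ trcl u ∪ {u} := by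
    simp only [htrcl z w, ZFSet.mem_union, ZFSet.mem_singleton]
    constructor
    · rintro (hw | ⟨y, hy, hw⟩)
      exacts [⟨w, hw, .inr rfl⟩, ⟨y, hy, .inl hw⟩]
    · rintro ⟨u, hu, hw | rfl⟩
      exacts [.inr ⟨u, hu, hw⟩, .inl hu]
  have hsingleton : PrimRecSet (n := 1) fun v => trcl (v 0) ∪ {v 0} := by
    refine .recursion .adjoin fun _ z U hU => ?_
    have : U = trcl z := ZFSet.ext fun w => (hU w).trans (mem_trcl_iff z w).symm
    rw [this]
    rfl
  exact hsingleton.biUnion fun _ z w => mem_trcl_iff z w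
end

section
/- Let κ be an uncountable cardinal (ℵ₀ < κ) and let F be a primitive recursive set function of arity n. If x₀, …, x_{n−1} are ZFSets each belonging to H(κ), then F(x₀, …, x_{n−1}) ∈ H(κ). -/
universe u

open scoped Classical

/-- The transitive closure of `{x}`: the smallest collection of `ZFSet`s containing `x`
and closed under membership. -/
def transCl (x : ZFSet.{u}) : Set ZFSet.{u} :=
  ⋂₀ {T : Set ZFSet.{u} | x ∈ T ∧ ∀ y ∈ T, ∀ z : ZFSet.{u}, z ∈ y → z ∈ T}

/-- `x` has hereditary cardinality less than `κ`, i.e. `x ∈ H(κ)`. -/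
def InH (κ : Cardinal.{u + 1}) (x : ZFSet.{u}) : Prop :=
  Cardinal.mk (transCl x) < κ

/-!
`H(κ)` itself need not be closed under the recursion scheme when `κ` is singular, so fix an
infinite `c < κ` bounding `|TC(xᵢ)|` for the inputs. The class of sets `x` with `|TC(x)| ≤ c`
contains `∅`, is closed under `x ∪ {y}` and under `∈`, and contains every union of a family
`(f u)_{u ∈ z}` of its members indexed by a member `z`, because
`TC(x) = {x} ∪ ⋃_{y ∈ x} TC(y)` and `c · c = c`. Any class with these closure properties is
preserved by every primitive recursive set function: by induction on the definition, with
`∈`-induction on the last argument for the recursion scheme.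
-/

open Cardinal

lemma mem_transCl_self (x : ZFSet.{u}) : x ∈ transCl x :=
  Set.mem_sInter.2 fun _ hT => hT.1

lemma mem_transCl_of_mem {x y z : ZFSet.{u}} (hy : y ∈ transCl x) (hz : z ∈ y) :
    z ∈ transCl x :=
  Set.mem_sInter.2 fun T hT => hT.2 y (Set.mem_sInter.1 hy T hT) z hz

lemma transCl_subset {x : ZFSet.{u}} {T : Set ZFSet.{u}} (hx : x ∈ T)
    (hT : ∀ y ∈ T, ∀ z : ZFSet.{u}, z ∈ y → z ∈ T) : transCl x ⊆ T :=
  fun _ h => Set.mem_sInter.1 h T ⟨hx, hT⟩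

lemma transCl_subset_transCl {x y : ZFSet.{u}} (h : y ∈ transCl x) :
    transCl y ⊆ transCl x :=
  transCl_subset h fun _ ha _ hb => mem_transCl_of_mem ha hb

lemma transCl_eq_insert_biUnion (x : ZFSet.{u}) :
    transCl x = insert x (⋃ y ∈ (x : Set ZFSet.{u}), transCl y) := by
  refine (transCl_subset (Set.mem_insert _ _) ?_).antisymm ?_
  · rintro y (rfl | hy) z hz
    · exact Set.mem_insert_of_mem _ (Set.mem_biUnion hz (mem_transCl_self z))
    · obtain ⟨w, hw, hyw⟩ := Set.mem_iUnion₂.1 hy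
      exact Set.mem_insert_of_mem _ (Set.mem_biUnion hw (mem_transCl_of_mem hyw hz))
  · refine Set.insert_subset (mem_transCl_self x) (Set.iUnion₂_subset fun y hy => ?_)
    exact transCl_subset_transCl (mem_transCl_of_mem (mem_transCl_self x) hy)

lemma mk_biUnion_le_of_forall_le {ι α : Type u} {c : Cardinal.{u}} (hc : ℵ₀ ≤ c)
    {s : Set ι} {A : ι → Set α} (hs : #s ≤ c) (hA : ∀ i ∈ s, #(A i) ≤ c) :
    #(⋃ i ∈ s, A i) ≤ c :=
  (mk_biUnion_le A s).trans <|
    mul_le_of_le hc hs (ciSup_le' fun i => hA i.1 i.2)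

lemma mk_transCl_le_iff {c : Cardinal.{u + 1}} (hc : ℵ₀ ≤ c) {x : ZFSet.{u}} :
    #(transCl x) ≤ c ↔ #(x : Set ZFSet.{u}) ≤ c ∧ ∀ y ∈ x, #(transCl y) ≤ c := by
  refine ⟨fun h => ⟨?_, fun y hy => ?_⟩, fun ⟨hx, hy⟩ => ?_⟩
  · refine (mk_le_mk_of_subset fun y hy => ?_).trans h
    exact mem_transCl_of_mem (mem_transCl_self x) hy
  · exact (mk_le_mk_of_subset
      (transCl_subset_transCl (mem_transCl_of_mem (mem_transCl_self x) hy))).trans h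
  · rw [transCl_eq_insert_biUnion]
    exact mk_insert_le.trans <| add_le_of_le hc
      (mk_biUnion_le_of_forall_le hc hx hy) (one_lt_aleph0.le.trans hc)

lemma exists_mem_iff_exists_mem_apply (z : ZFSet.{u}) (f : ZFSet.{u} → ZFSet.{u}) :
    ∃ U : ZFSet.{u}, ∀ w, w ∈ U ↔ ∃ u ∈ z, w ∈ f u :=
  ⟨ZFSet.iUnion fun u : z => f u, fun w => by simp⟩

structure PrimRecClosed (P : ZFSet.{u} → Prop) : Prop where
  empty : P ∅
  union_singleton {x y : ZFSet.{u}} : P x → P y → P (x ∪ {y})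
  of_mem {x y : ZFSet.{u}} : P x → y ∈ x → P y
  of_forall_mem_iff {z U : ZFSet.{u}} {f : ZFSet.{u} → ZFSet.{u}} :
    P z → (∀ u ∈ z, P (f u)) → (∀ w, w ∈ U ↔ ∃ u ∈ z, w ∈ f u) → P U

namespace PrimRecClosed

variable {P : ZFSet.{u} → Prop}

lemma recursion {n : ℕ} {G : (Fin (n + 2) → ZFSet.{u}) → ZFSet.{u}}
    {F : (Fin (n + 1) → ZFSet.{u}) → ZFSet.{u}} (hP : PrimRecClosed P)
    (hG : ∀ y, (∀ i, P (y i)) → P (G y))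
    (hF : ∀ (x : Fin n → ZFSet.{u}) (z U : ZFSet.{u}),
      (∀ w : ZFSet.{u}, w ∈ U ↔ ∃ u ∈ z, w ∈ F (Fin.snoc x u)) →
      F (Fin.snoc x z) = G (Fin.cons U (Fin.snoc x z)))
    {x : Fin n → ZFSet.{u}} (hx : ∀ i, P (x i)) (z : ZFSet.{u}) (hz : P z) :
    P (F (Fin.snoc x z)) := by
  induction z using ZFSet.inductionOn with
  | _ z ih =>
    obtain ⟨U, hU⟩ := exists_mem_iff_exists_mem_apply z fun u => F (Fin.snoc x u)
    have hPU : P U := hP.of_forall_mem_iff hz (fun u hu => ih u hu (hP.of_mem hz hu)) hU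
    rw [hF x z U hU]
    refine hG _ (Fin.cases hPU fun i => ?_)
    rw [Fin.cons_succ]
    exact Fin.lastCases (by rwa [Fin.snoc_last])
      (fun j => by rw [Fin.snoc_castSucc]; exact hx j) i

theorem primRecSet (hP : PrimRecClosed P) {n : ℕ} {F : (Fin n → ZFSet.{u}) → ZFSet.{u}}
    (hF : PrimRecSet F) {x : Fin n → ZFSet.{u}} (hx : ∀ i, P (x i)) : P (F x) := by
  induction hF with
  | empty => exact hP.empty
  | proj i => exact hx i
  | adjoin => exact hP.union_singleton (hx 0) (hx 1)
  | cond =>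
    dsimp only
    split
    exacts [hx 2, hx 3]
  | comp₁ _ _ ihG ihH =>
    refine ihG (Fin.cases ?_ fun j => ?_)
    · exact ihH fun i => hx _
    · exact hx _
  | comp₂ _ _ ihG ihH =>
    refine ihG (Fin.addCases (fun i => ?_) fun j => ?_)
    · rw [Fin.append_left]
      exact Fin.lastCases (by rw [Fin.snoc_last]; exact ihH fun j => hx _)
        (fun j => by rw [Fin.snoc_castSucc]; exact hx _) i
    · rw [Fin.append_right]
      exact hx _
  | recursion _ hrec ihG =>
    rw [← Fin.snoc_init_self x]
    exact recursion hP (fun y hy => ihG hy) hrec (fun i => hx _) _ (hx _)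

end PrimRecClosed

lemma primRecClosed_mk_transCl_le {c : Cardinal.{u + 1}} (hc : ℵ₀ ≤ c) :
    PrimRecClosed fun x : ZFSet.{u} => #(transCl x) ≤ c where
  empty := by
    rw [mk_transCl_le_iff hc, ZFSet.coe_empty, mk_eq_zero]
    exact ⟨zero_le, fun y hy => absurd hy (ZFSet.notMem_empty y)⟩
  union_singleton {x y} hx hy := by
    rw [mk_transCl_le_iff hc] at hx ⊢
    refine ⟨?_, fun w hw => ?_⟩
    · rw [ZFSet.coe_union, ZFSet.coe_singleton]
      exact (mk_union_le _ _).trans <|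
        add_le_of_le hc hx.1 ((mk_singleton y).le.trans (one_lt_aleph0.le.trans hc))
    · rcases ZFSet.mem_union.1 hw with hw | hw
      · exact hx.2 w hw
      · rwa [ZFSet.mem_singleton.1 hw]
  of_mem hx hy := ((mk_transCl_le_iff hc).1 hx).2 _ hy
  of_forall_mem_iff {z U f} hz hf hU := by
    rw [mk_transCl_le_iff hc] at hz ⊢
    refine ⟨?_, fun w hw => ?_⟩
    · have hsub : (U : Set ZFSet.{u}) ⊆ ⋃ u ∈ (z : Set ZFSet.{u}), (f u : Set ZFSet.{u}) :=
        fun w hw =>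
          let ⟨u, hu, hwu⟩ := (hU w).1 hw
          Set.mem_biUnion hu hwu
      exact (mk_le_mk_of_subset hsub).trans <| mk_biUnion_le_of_forall_le hc hz.1
        fun u hu => ((mk_transCl_le_iff hc).1 (hf u hu)).1
    · obtain ⟨u, hu, hwu⟩ := (hU w).1 hw
      exact ((mk_transCl_le_iff hc).1 (hf u hu)).2 w hwu

/-- Primitive recursive set functions map `H(κ)` into `H(κ)` for every uncountable
cardinal `κ`. -/
theorem primRecSet_mem_H (κ : Cardinal.{u + 1}) (hκ : Cardinal.aleph0 < κ)
    {n : ℕ} {F : (Fin n → ZFSet.{u}) → ZFSet.{u}} (hF : PrimRecSet F)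
    (x : Fin n → ZFSet.{u}) (hx : ∀ i : Fin n, InH κ (x i)) :
    InH κ (F x) := by
  let c : Cardinal.{u + 1} := ℵ₀ ⊔ Finset.univ.sup fun i => #(transCl (x i))
  have hc : ℵ₀ ≤ c := le_sup_left
  have hxc : ∀ i, #(transCl (x i)) ≤ c := fun i =>
    le_sup_of_le_right (Finset.le_sup (f := fun i => #(transCl (x i))) (Finset.mem_univ i))
  have hcκ : c < κ :=
    max_lt hκ ((Finset.sup_lt_iff (bot_le.trans_lt hκ)).2 fun i _ => hx i)
  exact ((primRecClosed_mk_transCl_le hc).primRecSet hF hxc).trans_lt hcκ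
end
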